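/- For every n ≥ 1, g(n) = pa(n) = pb(n) = pc(n) = pd(n) = r(n) = 2^{(3^{n+1}−7)/2} (note that 3^{n+1}−7 is a non-negative even integer for n ≥ 1). -/
import Mathlib


/-- The sextuple of boundary counts `(g, pa, pb, pc, pd, r)` for the
eight-vertex model on the Sierpinski gasket `SG(n)`. -/
structure EVCounts where
  g : ℕ
  pa : ℕ
  pb : ℕ
  pc : ℕ
  pd : ℕ
  r : ℕ

/-- One step of the recursion for the eight-vertex model on `SG(n)`. -/
def evStep (s : EVCounts) : EVCounts :=
  let g := s.g
  let pa := s.pa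
  let pb := s.pb
  let pc := s.pc
  let pd := s.pd
  let r := s.r
  { g := 4*g^3 + 8*g^2*pa + 8*g^2*pb + 12*g^2*pc + 4*g^2*pd + 5*g*pa^2 + 5*g*pb^2
      + 10*g*pa*pb + 12*g*pa*pc + 4*g*pa*pd + 12*g*pb*pc + 4*g*pb*pd + 4*g^2*r
      + pa^3 + pb^3 + 3*pa^2*pb + 3*pa^2*pc + pa^2*pd + 3*pb^2*pa + 3*pb^2*pc
      + pb^2*pd + 6*pa*pb*pc + 2*pa*pb*pd + 4*g*pa*r + 4*g*pb*r + pa^2*r + pb^2*r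
      + 2*pa*pb*r
    pa := 2*g^2*pa + 2*g^2*pb + 3*g*pa^2 + 3*g*pb^2 + 6*g*pa*pb + 6*g*pa*pc
      + 2*g*pa*pd + 6*g*pb*pc + 2*g*pb*pd + 4*g^2*r + pa^3 + pb^3 + 3*pa^2*pb
      + 3*pa^2*pc + pa^2*pd + 3*pb^2*pa + 3*pb^2*pc + pb^2*pd + 6*pa*pb*pc
      + 2*pa*pb*pd + 8*g*pa*r + 8*g*pb*r + 12*g*pc*r + 4*g*pd*r + 3*pa^2*r
      + 3*pb^2*r + 6*pa*pb*r + 6*pa*pc*r + 2*pa*pd*r + 6*pb*pc*r + 2*pb*pd*r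
      + 4*g*r^2 + 2*pa*r^2 + 2*pb*r^2
    pb := 2*g^2*pa + 2*g^2*pb + 3*g*pa^2 + 3*g*pb^2 + 6*g*pa*pb + 6*g*pa*pc
      + 2*g*pa*pd + 6*g*pb*pc + 2*g*pb*pd + 4*g^2*r + pa^3 + pb^3 + 3*pa^2*pb
      + 3*pa^2*pc + pa^2*pd + 3*pb^2*pa + 3*pb^2*pc + pb^2*pd + 6*pa*pb*pc
      + 2*pa*pb*pd + 8*g*pa*r + 8*g*pb*r + 12*g*pc*r + 4*g*pd*r + 3*pa^2*r
      + 3*pb^2*r + 6*pa*pb*r + 6*pa*pc*r + 2*pa*pd*r + 6*pb*pc*r + 2*pb*pd*r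
      + 4*g*r^2 + 2*pa*r^2 + 2*pb*r^2
    pc := g^3 + 3*g^2*pa + 3*g^2*pb + 3*g*pa^2 + 3*g*pb^2 + 6*g*pa*pb + 3*g^2*r
      + pa^3 + pb^3 + 27*pc^3 + pd^3 + 3*pa^2*pb + 3*pb^2*pa + 27*pc^2*pd
      + 9*pd^2*pc + 6*g*pa*r + 6*g*pb*r + 3*pa^2*r + 3*pb^2*r + 6*pa*pb*r
      + 3*g*r^2 + 3*pa*r^2 + 3*pb*r^2 + r^3
    pd := g^3 + 3*g^2*pa + 3*g^2*pb + 3*g*pa^2 + 3*g*pb^2 + 6*g*pa*pb + 3*g^2*r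
      + pa^3 + pb^3 + 27*pc^3 + pd^3 + 3*pa^2*pb + 3*pb^2*pa + 27*pc^2*pd
      + 9*pd^2*pc + 6*g*pa*r + 6*g*pb*r + 3*pa^2*r + 3*pb^2*r + 6*pa*pb*r
      + 3*g*r^2 + 3*pa*r^2 + 3*pb*r^2 + r^3
    r := g*pa^2 + g*pb^2 + 2*g*pa*pb + pa^3 + pb^3 + 3*pa^2*pb + 3*pa^2*pc
      + pa^2*pd + 3*pb^2*pa + 3*pb^2*pc + pb^2*pd + 6*pa*pb*pc + 2*pa*pb*pd
      + 4*g*pa*r + 4*g*pb*r + 5*pa^2*r + 5*pb^2*r + 10*pa*pb*r + 12*pa*pc*r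
      + 4*pa*pd*r + 12*pb*pc*r + 4*pb*pd*r + 4*g*r^2 + 8*pa*r^2 + 8*pb*r^2
      + 12*pc*r^2 + 4*pd*r^2 + 4*r^3 }

/-- The eight-vertex boundary counts at stage `n`. -/
def evSeq : ℕ → EVCounts
  | 0 => ⟨0, 0, 1, 0, 1, 0⟩
  | n + 1 => evStep (evSeq n)

def evg (n : ℕ) : ℕ := (evSeq n).g
def evpa (n : ℕ) : ℕ := (evSeq n).pa
def evpb (n : ℕ) : ℕ := (evSeq n).pb
def evpc (n : ℕ) : ℕ := (evSeq n).pc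
def evpd (n : ℕ) : ℕ := (evSeq n).pd
def evr (n : ℕ) : ℕ := (evSeq n).r


lemma evStep_const (e : ℕ) :
    evStep ⟨2^e, 2^e, 2^e, 2^e, 2^e, 2^e⟩ =
      ⟨2^(3*e+7), 2^(3*e+7), 2^(3*e+7), 2^(3*e+7), 2^(3*e+7), 2^(3*e+7)⟩ := by
  have h : (2:ℕ)^(3*e+7) = 128 * (2^e)^3 := by
    rw [pow_add, mul_comm 3 e, pow_mul]; ring
  simp only [evStep, EVCounts.mk.injEq, h]
  refine ⟨?_, ?_, ?_, ?_, ?_, ?_⟩ <;> ring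

lemma evSeq_eq (n : ℕ) (hn : 1 ≤ n) :
    evSeq n = ⟨2^((3^(n+1)-7)/2), 2^((3^(n+1)-7)/2), 2^((3^(n+1)-7)/2),
      2^((3^(n+1)-7)/2), 2^((3^(n+1)-7)/2), 2^((3^(n+1)-7)/2)⟩ := by
  induction n with
  | zero => omega
  | succ m ih =>
    rcases Nat.eq_zero_or_pos m with hm | hm
    · subst hm
      norm_num [evSeq, evStep]
    · have hk : 9 ≤ 3^(m+1) := by
        calc (9:ℕ) = 3^2 := by norm_num
        _ ≤ 3^(m+1) := Nat.pow_le_pow_right (by norm_num) (by omega)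
      have hodd : 3^(m+1) % 2 = 1 := by
        rw [Nat.pow_mod]; simp
      have hexp : (3^(m+2)-7)/2 = 3 * ((3^(m+1)-7)/2) + 7 := by
        have h3 : (3:ℕ)^(m+2) = 3 * 3^(m+1) := by ring
        omega
      rw [show m + 1 + 1 = m + 2 from rfl, evSeq, ih hm, evStep_const, hexp]

theorem stmt_16 (n : ℕ) (hn : 1 ≤ n) :
    evg n = 2 ^ ((3 ^ (n + 1) - 7) / 2) ∧
    evpa n = 2 ^ ((3 ^ (n + 1) - 7) / 2) ∧
    evpb n = 2 ^ ((3 ^ (n + 1) - 7) / 2) ∧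
    evpc n = 2 ^ ((3 ^ (n + 1) - 7) / 2) ∧
    evpd n = 2 ^ ((3 ^ (n + 1) - 7) / 2) ∧
    evr n = 2 ^ ((3 ^ (n + 1) - 7) / 2) := by
  simp [evg, evpa, evpb, evpc, evpd, evr, evSeq_eq n hn]
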